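/- arXiv:1602.04079 — 3 statements merged into one kernel-verified Lean document; each statement's English description precedes it below -/
import Mathlib

section
/- Let D be a finite set and R = 𝔽₂[t_k : k ∈ D]/(t_k²). For α = Σ_{A,B} c_{A,B} e_A ⊗ e_B ∈ R ⊗ R define the induced operator α_* : R → R by α_*(e_I) = Σ_{A,B} c_{A,B} deg(e_I e_A) e_B, where deg extracts the coefficient of e_D. Set x_J = ∏_{k∈J}(e_k⊗1 + 1⊗e_k). Then for all I, J ⊆ D: (x_J)_*(e_I) = e_{I∩J} if I ∪ J = D, and (x_J)_*(e_I) = 0 otherwise. -/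
open MvPolynomial Finset

set_option synthInstance.maxHeartbeats 1000000
set_option maxHeartbeats 1000000

/-- The quotient ring 𝔽₂[t_k : k ∈ D]/(t_k²). -/
abbrev Rq (D : Type*) : Type _ :=
  MvPolynomial D (ZMod 2) ⧸
    Ideal.span (Set.range fun k : D => (X k : MvPolynomial D (ZMod 2)) ^ 2)

/-- The class of the square-free monomial ∏_{k ∈ I} t_k. -/
noncomputable def eMon {D : Type*} (I : Finset D) : Rq D :=
  Ideal.Quotient.mk _ (∏ k ∈ I, X k)

/-!
Since `t_k² = 0`, the product `e_I e_{J₁}` vanishes unless `I` and `J₁` are disjoint, so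
`deg (e_I e_{J₁})` is `1` exactly when `J₁ = Iᶜ`. The sum therefore collapses to the single term
`J₁ = Iᶜ`, which occurs iff `Iᶜ ⊆ J`, i.e. `I ∪ J = D`, and then `J \ Iᶜ = I ∩ J`.
-/

lemma eMon_mul {D : Type*} [DecidableEq D] (I J : Finset D) :
    eMon I * eMon J = if Disjoint I J then eMon (I ∪ J) else 0 := by
  unfold eMon
  rw [← map_mul]
  split_ifs with h
  · rw [← prod_union h]
  · obtain ⟨k, hkI, hkJ⟩ := not_disjoint_iff.mp h
    rw [Ideal.Quotient.eq_zero_iff_mem, ← mul_prod_erase I X hkI, ← mul_prod_erase J X hkJ,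
      mul_mul_mul_comm, ← sq]
    exact Ideal.mul_mem_right _ _ (Ideal.subset_span ⟨k, rfl⟩)

lemma Finset.compl_subset_iff_union_eq_univ {α : Type*} [Fintype α] [DecidableEq α]
    {s t : Finset α} : sᶜ ⊆ t ↔ s ∪ t = univ := by
  simp [eq_univ_iff_forall, subset_iff, or_iff_not_imp_left]

lemma Finset.disjoint_and_union_eq_univ_iff {α : Type*} [Fintype α] [DecidableEq α]
    {s t : Finset α} : Disjoint s t ∧ s ∪ t = univ ↔ t = sᶜ := by
  rw [eq_compl_iff_isCompl, isCompl_comm, isCompl_iff, codisjoint_iff]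
  rfl

lemma deg_eMon_mul {D : Type*} [Fintype D] [DecidableEq D] {deg : Rq D →ₗ[ZMod 2] ZMod 2}
    (hdeg : ∀ I : Finset D, deg (eMon I) = if I = univ then 1 else 0) (I J : Finset D) :
    deg (eMon I * eMon J) = if J = Iᶜ then 1 else 0 := by
  simp only [eMon_mul, ← disjoint_and_union_eq_univ_iff]
  split_ifs <;> simp_all

-- The left-hand side is `(x_J)_*(e_I)`, from `x_J = Σ_{J₁ ⊆ J} e_{J₁} ⊗ e_{J \ J₁}`.
/-- Lemma 5.5: (x_J)_*(e_I) = e_{I∩J} if I ∪ J = D and 0 otherwise, where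
(x_J)_*(e_I) = Σ_{J₁⊆J} deg(e_I e_{J₁}) e_{J∖J₁}. -/
theorem xJ_star_eMon {D : Type*} [Fintype D] [DecidableEq D]
    (deg : Rq D →ₗ[ZMod 2] ZMod 2)
    (hdeg : ∀ I : Finset D, deg (eMon I) = if I = Finset.univ then 1 else 0)
    (I J : Finset D) :
    (∑ J₁ ∈ J.powerset, deg (eMon I * eMon J₁) • eMon (J \ J₁))
      = if I ∪ J = Finset.univ then eMon (I ∩ J) else 0 := by
  simp only [deg_eMon_mul hdeg, ite_smul, one_smul, zero_smul, sum_ite_eq', mem_powerset,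
    compl_subset_iff_union_eq_univ, sdiff_compl, inf_comm, inf_eq_inter]
end

section
/- Let D be a finite set of pairwise distinct positive integers, and let R = 𝔽₂[t_k : k ∈ D]/(t_k²), graded by assigning degree k to t_k. Let B ⊆ R be a subring spanned by homogeneous elements and closed under all operators (x_J)_* for J ⊆ D (where (x_J)_*(e_I) = e_{I∩J} if I∪J = D and 0 otherwise, extended linearly). Then B is generated as a ring by the set {e_k : k ∈ D, e_k ∈ B}; equivalently, B is spanned over 𝔽₂ by the monomials e_I with I ⊆ {k ∈ D : e_k ∈ B}. -/
open MvPolynomial Finset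

set_option synthInstance.maxHeartbeats 1000000
set_option maxHeartbeats 1000000

/-!
Induct on the degree `d` of a homogeneous element `x = ∑_{I ∈ S} e_I` of `B`. Let `k ∈ I ∈ S`.
If `I ≠ {k}`, the operator `(x_J)_*` with `J` the complement of `e = I ∖ {k}` sends `x` to
`∑_{e ⊆ I'} e_{I' ∖ e}`, a homogeneous element of `B` of degree `k < d` in which `e_k` occurs;
by induction `e_k ∈ B`. If `I = {k}`, then since the degrees are distinct every other `I' ∈ S`
has at least two elements, so `e_{I'} ∈ B` by the first case and hence `e_k ∈ B` as well.
Over `𝔽₂` every element of a homogeneous span is such a sum of distinct monomials.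
-/

theorem eMon_eq_prod {σ : Type*} (I : Finset σ) : eMon I = ∏ k ∈ I, eMon ({k} : Finset σ) := by
  simp only [eMon, prod_singleton, map_prod]

theorem Submodule.exists_finset_sum_eq_of_mem_span_zmod_two {ι M : Type*} [AddCommGroup M]
    [Module (ZMod 2) M] {f : ι → M} {P : ι → Prop} {x : M}
    (hx : x ∈ Submodule.span (ZMod 2) {y | ∃ i, P i ∧ y = f i}) :
    ∃ S : Finset ι, (∀ i ∈ S, P i) ∧ x = ∑ i ∈ S, f i := by
  have himage : {y | ∃ i, P i ∧ y = f i} = f '' {i | P i} := by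
    ext; simp [eq_comm]
  rw [himage, Finsupp.mem_span_image_iff_linearCombination] at hx
  obtain ⟨l, hl, rfl⟩ := hx
  refine ⟨l.support, fun i hi => hl hi, ?_⟩
  rw [Finsupp.linearCombination_apply, Finsupp.sum]
  refine sum_congr rfl fun i hi => ?_
  rw [(by decide : ∀ a : ZMod 2, a ≠ 0 → a = 1) _ (Finsupp.mem_support_iff.1 hi), one_smul]

theorem Finset.single_lt_sum_of_ne_singleton {σ : Type*} [DecidableEq σ] {w : σ → ℕ}
    (hw : ∀ k, 0 < w k) {I : Finset σ} {k : σ} (hk : k ∈ I) (hI : I ≠ {k}) :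
    w k < ∑ j ∈ I, w j := by
  have hrest : (I.erase k).Nonempty := nonempty_iff_ne_empty.2 fun h =>
    ((erase_eq_empty_iff I k).1 h).elim (ne_empty_of_mem hk) hI
  rw [← add_sum_erase I w hk]
  exact Nat.lt_add_of_pos_right (sum_pos (fun j _ => hw j) hrest)

section Contraction

variable {σ : Type*} [Fintype σ] [DecidableEq σ] {B : Subalgebra (ZMod 2) (Rq σ)}
  {op : Finset σ → (Rq σ →ₗ[ZMod 2] Rq σ)}

theorem op_compl_sum_eMon
    (hop : ∀ J I, op J (eMon I) = if I ∪ J = univ then eMon (I ∩ J) else 0)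
    (e : Finset σ) (S : Finset (Finset σ)) :
    op eᶜ (∑ I ∈ S, eMon I) = ∑ I ∈ S with e ⊆ I, eMon (I \ e) := by
  rw [map_sum, sum_filter]
  refine sum_congr rfl fun I _ => ?_
  have hunion : I ∪ eᶜ = univ ↔ e ⊆ I := by
    simp only [eq_univ_iff_forall, subset_iff, mem_union, mem_compl]
    exact ⟨fun h x hx => (h x).resolve_right (not_not.2 hx), fun h x => or_not_of_imp (h ·)⟩
  simp only [hop, hunion, sdiff_eq_inter_compl]

theorem sum_eMon_image_sdiff_mem
    (hop : ∀ J I, op J (eMon I) = if I ∪ J = univ then eMon (I ∩ J) else 0)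
    (hclosed : ∀ J, ∀ x ∈ B, op J x ∈ B) (e : Finset σ) {S : Finset (Finset σ)}
    (hS : ∑ I ∈ S, eMon I ∈ B) :
    ∑ I ∈ (S.filter (e ⊆ ·)).image (· \ e), eMon I ∈ B := by
  have hinj : Set.InjOn (· \ e) (S.filter (e ⊆ ·) : Set (Finset σ)) := fun a ha b hb h => by
    simp only [coe_filter, Set.mem_ofPred_eq] at ha hb
    rw [← sdiff_union_of_subset ha.2, ← sdiff_union_of_subset hb.2]
    exact congrArg (· ∪ e) h
  rw [sum_image hinj, ← op_compl_sum_eMon hop]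
  exact hclosed _ _ hS

theorem eMon_singleton_mem_of_sum_mem {w : σ → ℕ} (hw : ∀ k, 0 < w k)
    (hw_inj : Function.Injective w)
    (hop : ∀ J I, op J (eMon I) = if I ∪ J = univ then eMon (I ∩ J) else 0)
    (hclosed : ∀ J, ∀ x ∈ B, op J x ∈ B) (d : ℕ) :
    ∀ S : Finset (Finset σ), (∀ I ∈ S, ∑ k ∈ I, w k = d) → ∑ I ∈ S, eMon I ∈ B →
      ∀ I ∈ S, ∀ k ∈ I, eMon {k} ∈ B := by
  induction d using Nat.strong_induction_on with
  | _ d IH =>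
  intro S hdeg hS
  have of_ne_singleton : ∀ I ∈ S, ∀ k ∈ I, I ≠ {k} → eMon {k} ∈ B := by
    intro I hI k hk hne
    have hdeg' : ∀ t ∈ (S.filter (I.erase k ⊆ ·)).image (· \ I.erase k), ∑ j ∈ t, w j = w k := by
      simp only [mem_image, mem_filter]
      rintro _ ⟨I', ⟨hI', hsub⟩, rfl⟩
      have := sum_sdiff hsub (f := w)
      have := add_sum_erase I w hk
      have := hdeg I hI
      have := hdeg I' hI'
      omega
    have hk' : {k} ∈ (S.filter (I.erase k ⊆ ·)).image (· \ I.erase k) :=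
      mem_image.2 ⟨I, mem_filter.2 ⟨hI, erase_subset k I⟩, sdiff_erase_self hk⟩
    exact IH _ (hdeg I hI ▸ single_lt_sum_of_ne_singleton hw hk hne) _ hdeg'
      (sum_eMon_image_sdiff_mem hop hclosed _ hS) {k} hk' k (mem_singleton_self k)
  intro I hI k hk
  by_cases hne : I = {k}
  · subst hne
    have hrest : ∀ I' ∈ S.erase {k}, eMon I' ∈ B := fun I' hI' => by
      rw [eMon_eq_prod]
      refine prod_mem fun j hj => of_ne_singleton I' (mem_of_mem_erase hI') j hj fun h => ?_
      have hwj : w j = w k := by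
        simpa [h] using (hdeg I' (mem_of_mem_erase hI')).trans (hdeg {k} hI).symm
      exact ne_of_mem_erase hI' (by rw [h, hw_inj hwj])
    rw [← add_sum_erase _ _ hI] at hS
    exact (add_mem_cancel_right (sum_mem hrest)).1 hS
  · exact of_ne_singleton I hI k hk hne

end Contraction

/-- Theorem 5.7 (algebraic form): a homogeneously-spanned subring of
𝔽₂[t_k : k∈D]/(t_k²) (graded with deg t_k = k) closed under all operators
(x_J)_* is spanned by the monomials e_I with all e_k, k ∈ I, in the subring. -/
theorem rational_subring_generated_by_generators
    (D : Finset ℕ) (hpos : ∀ k ∈ D, 0 < k)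
    (B : Subalgebra (ZMod 2) (Rq ↥D))
    -- B is spanned by its homogeneous elements
    (hhom : Subalgebra.toSubmodule B = Submodule.span (ZMod 2)
      {x : Rq ↥D | x ∈ B ∧ ∃ d : ℕ, x ∈ Submodule.span (ZMod 2)
        {y : Rq ↥D | ∃ I : Finset ↥D, (∑ k ∈ I, (k : ℕ)) = d ∧ y = eMon I}})
    -- the operators (x_J)_*
    (op : Finset ↥D → (Rq ↥D →ₗ[ZMod 2] Rq ↥D))
    (hop : ∀ (J I : Finset ↥D),
      op J (eMon I) = if I ∪ J = Finset.univ then eMon (I ∩ J) else 0)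
    -- B is closed under all the operators (x_J)_*
    (hclosed : ∀ (J : Finset ↥D), ∀ x ∈ B, op J x ∈ B) :
    Subalgebra.toSubmodule B = Submodule.span (ZMod 2)
      {y : Rq ↥D | ∃ I : Finset ↥D, (∀ k ∈ I, eMon {k} ∈ B) ∧ y = eMon I} := by
  refine le_antisymm ?_ (Submodule.span_le.2 ?_)
  · rw [hhom]
    refine Submodule.span_le.2 fun x ⟨hxB, d, hx⟩ => ?_
    obtain ⟨S, hdeg, rfl⟩ := Submodule.exists_finset_sum_eq_of_mem_span_zmod_two hx
    refine sum_mem fun I hI => Submodule.subset_span ⟨I, fun k hk => ?_, rfl⟩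
    exact eMon_singleton_mem_of_sum_mem (w := Subtype.val) (fun k => hpos k k.2)
      Subtype.val_injective hop hclosed d S hdeg hxB I hI k hk
  · rintro _ ⟨I, hI, rfl⟩
    rw [SetLike.mem_coe, Subalgebra.mem_toSubmodule, eMon_eq_prod]
    exact prod_mem hI
end

section
/- Let D be a finite set, R = 𝔽₂[t_k : k∈D]/(t_k²), J ⊆ D, J̄ = D∖J. For S ⊆ J̄ and L, L' ⊆ J define θ_{S,L,L'} = Σ_{M⊆S} e_{M∪L} ⊗ e_{(S∖M) ∪ (J∖L')} ∈ R ⊗_{𝔽₂} R. Then the family {θ_{S,L,L'} : S ⊆ J̄, L, L' ⊆ J} is linearly independent over 𝔽₂ (of cardinality 2^{|J̄| + 2|J|}). -/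
open MvPolynomial Finset

set_option synthInstance.maxHeartbeats 1000000
set_option maxHeartbeats 1000000

open scoped TensorProduct

/-!
Pair `θ_{S',L₁,L₁'}` with the functional "coefficient of `e_L ⊗ e_{S ∪ (J ∖ L')}`". A summand
`e_{M ∪ L₁} ⊗ e_{(S' ∖ M) ∪ (J ∖ L₁')}` can only hit that coefficient when `M = ∅`, because
`M ⊆ J̄` while `L ⊆ J`; splitting both sides along `J̄ ⊔ J` then forces `(S', L₁, L₁') = (S, L, L')`.
So these functionals are dual to the family, which is therefore linearly independent.
-/

theorem linearIndependent_of_eval_eq_ite {ι R M : Type*} [DecidableEq ι] [Semiring R]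
    [AddCommMonoid M] [Module R M] (v : ι → M) (f : ι → M →ₗ[R] R)
    (hf : ∀ i j, f i (v j) = if i = j then 1 else 0) : LinearIndependent R v := by
  refine linearIndependent_iff'ₛ.mpr fun s g g' hg i hi => ?_
  simpa [hf, hi] using congrArg (f i) hg

namespace MvPolynomial

variable {σ R : Type*} [CommSemiring R]

theorem coeff_eq_zero_of_mem_span_X_sq {m : σ →₀ ℕ} (hm : ∀ k, m k ≤ 1) {x : MvPolynomial σ R}
    (hx : x ∈ Ideal.span (Set.range fun k : σ => (X k : MvPolynomial σ R) ^ 2)) :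
    coeff m x = 0 := by
  have hspan : Set.range (fun k : σ => (X k : MvPolynomial σ R) ^ 2) =
      (fun s => monomial s (1 : R)) '' Set.range fun k => Finsupp.single k 2 := by
    simp only [← Set.range_comp, Function.comp_def, X_pow_eq_monomial]
  rw [hspan, mem_ideal_span_monomial_image] at hx
  by_contra hne
  obtain ⟨_, ⟨k, rfl⟩, hle⟩ := hx m (mem_support_iff.mpr hne)
  have := (hle k).trans (hm k)
  simp at this

noncomputable def sqfreeExp [DecidableEq σ] (A : Finset σ) : σ →₀ ℕ :=
  ∑ k ∈ A, Finsupp.single k 1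

variable [DecidableEq σ]

theorem sqfreeExp_apply (A : Finset σ) (k : σ) : sqfreeExp A k = if k ∈ A then 1 else 0 := by
  simp [sqfreeExp, Finsupp.finsetSum_apply, Finsupp.single_apply]

theorem sqfreeExp_injective : Function.Injective (sqfreeExp (σ := σ)) := by
  intro A B h
  ext k
  have hk := congrArg (· k) h
  simp only [sqfreeExp_apply] at hk
  split_ifs at hk <;> tauto

theorem prod_X_eq_monomial_sqfreeExp (A : Finset σ) :
    (∏ k ∈ A, X k : MvPolynomial σ R) = monomial (sqfreeExp A) 1 :=
  (monomial_sum_one A _).symm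

end MvPolynomial

theorem Finset.union_eq_union_iff_of_subset_compl {α : Type*} [Fintype α] [DecidableEq α]
    {J S S' B B' : Finset α} (hS : S ⊆ Jᶜ) (hS' : S' ⊆ Jᶜ) (hB : B ⊆ J) (hB' : B' ⊆ J) :
    S ∪ B = S' ∪ B' ↔ S = S' ∧ B = B' := by
  refine ⟨fun h => ?_, fun ⟨rfl, rfl⟩ => rfl⟩
  simp only [subset_iff, mem_compl] at hS hS' hB hB'
  simp only [Finset.ext_iff, mem_union] at h ⊢
  grind

section Theta

variable {D : Type*} [DecidableEq D]

noncomputable def eMonCoeff (A : Finset D) : Rq D →ₗ[ZMod 2] ZMod 2 :=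
  (Submodule.liftQ _ (lcoeff (ZMod 2) (sqfreeExp A)) fun _ hx =>
      coeff_eq_zero_of_mem_span_X_sq (fun k => by rw [sqfreeExp_apply]; split <;> simp) hx) ∘ₗ
    (Submodule.Quotient.restrictScalarsEquiv (ZMod 2) _).symm.toLinearMap

theorem eMonCoeff_eMon (A I : Finset D) : eMonCoeff A (eMon I) = if A = I then 1 else 0 := by
  change coeff (sqfreeExp A) (∏ k ∈ I, X k) = _
  rw [prod_X_eq_monomial_sqfreeExp, coeff_monomial]
  simp only [sqfreeExp_injective.eq_iff, eq_comm]

noncomputable def eMonTmulCoeff (A B : Finset D) : Rq D ⊗[ZMod 2] Rq D →ₗ[ZMod 2] ZMod 2 :=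
  TensorProduct.lift ((LinearMap.mul (ZMod 2) (ZMod 2)).compl₁₂ (eMonCoeff A) (eMonCoeff B))

theorem eMonTmulCoeff_tmul (A B I K : Finset D) :
    eMonTmulCoeff A B (eMon I ⊗ₜ eMon K) = if A = I ∧ B = K then 1 else 0 := by
  simp only [eMonTmulCoeff, TensorProduct.lift.tmul, LinearMap.compl₁₂_apply, LinearMap.mul_apply',
    eMonCoeff_eMon, ite_zero_mul_ite_zero, mul_one]

noncomputable def theta (J S L L' : Finset D) : Rq D ⊗[ZMod 2] Rq D :=
  ∑ M ∈ S.powerset, eMon (M ∪ L) ⊗ₜ[ZMod 2] eMon ((S \ M) ∪ (J \ L'))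

variable [Fintype D] {J S S' L L₁ L' L₁' : Finset D}

theorem theta_index_eq_iff {M : Finset D} (hS : S ⊆ Jᶜ) (hS' : S' ⊆ Jᶜ) (hL : L ⊆ J)
    (hL₁ : L₁ ⊆ J) (hL' : L' ⊆ J) (hL₁' : L₁' ⊆ J) (hM : M ⊆ S') :
    (L = M ∪ L₁ ∧ S ∪ (J \ L') = (S' \ M) ∪ (J \ L₁')) ↔
      M = ∅ ∧ S = S' ∧ L = L₁ ∧ L' = L₁' := by
  rw [← Finset.empty_union L,
    union_eq_union_iff_of_subset_compl (empty_subset _) (hM.trans hS') hL hL₁,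
    union_eq_union_iff_of_subset_compl hS (sdiff_subset.trans hS') sdiff_subset sdiff_subset,
    sdiff_eq_sdiff_iff_inter_eq_inter,
    inter_eq_right.mpr hL', inter_eq_right.mpr hL₁']
  constructor
  · rintro ⟨⟨rfl, rfl⟩, h, rfl⟩
    simp_all
  · rintro ⟨rfl, rfl, rfl, rfl⟩
    simp

theorem eMonTmulCoeff_theta (hS : S ⊆ Jᶜ) (hS' : S' ⊆ Jᶜ) (hL : L ⊆ J) (hL₁ : L₁ ⊆ J)
    (hL' : L' ⊆ J) (hL₁' : L₁' ⊆ J) :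
    eMonTmulCoeff L (S ∪ (J \ L')) (theta J S' L₁ L₁') =
      if S = S' ∧ L = L₁ ∧ L' = L₁' then 1 else 0 := by
  have hterm : ∀ M ∈ S'.powerset,
      eMonTmulCoeff L (S ∪ (J \ L')) (eMon (M ∪ L₁) ⊗ₜ eMon ((S' \ M) ∪ (J \ L₁'))) =
        if M = ∅ then (if S = S' ∧ L = L₁ ∧ L' = L₁' then 1 else 0) else 0 := fun M hM => by
    rw [eMonTmulCoeff_tmul, ← ite_and]
    exact if_congr (theta_index_eq_iff hS hS' hL hL₁ hL' hL₁' (mem_powerset.mp hM)) rfl rfl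
  rw [theta, map_sum, sum_congr rfl hterm, sum_ite_eq', if_pos (empty_mem_powerset _)]

end Theta

/-- Lemma 9.1(i): the family θ_{S,L,L'} = Σ_{M⊆S} e_{M∪L} ⊗ e_{(S∖M)∪(J∖L')},
for S ⊆ J̄ and L, L' ⊆ J, is linearly independent over 𝔽₂. -/
theorem theta_family_linearIndependent {D : Type*} [Fintype D] [DecidableEq D]
    (J : Finset D) :
    LinearIndependent (ZMod 2)
      (fun p : {S : Finset D // S ⊆ Jᶜ} × {L : Finset D // L ⊆ J} ×
          {L' : Finset D // L' ⊆ J} =>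
        ∑ M ∈ (p.1 : Finset D).powerset,
          eMon (M ∪ (p.2.1 : Finset D)) ⊗ₜ[ZMod 2]
            eMon (((p.1 : Finset D) \ M) ∪ (J \ (p.2.2 : Finset D)))) := by
  have hdual : ∀ p q : {S : Finset D // S ⊆ Jᶜ} × {L : Finset D // L ⊆ J} × {L' : Finset D // L' ⊆ J},
      eMonTmulCoeff p.2.1 (p.1 ∪ (J \ p.2.2)) (theta J q.1 q.2.1 q.2.2) = if p = q then 1 else 0 := by
    intro p q
    rw [eMonTmulCoeff_theta p.1.2 q.1.2 p.2.1.2 q.2.1.2 p.2.2.2 q.2.2.2]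
    simp only [Prod.ext_iff, Subtype.ext_iff]
  exact linearIndependent_of_eval_eq_ite _ _ hdual
end
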